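/- arXiv:2306.16812 — 8 statements merged into one kernel-verified Lean document; each statement's English description precedes it below -/
import Mathlib

section
/- If H is an n×n matrix with entries ±1 and n > 2 rows that are pairwise orthogonal, then n is divisible by 4. -/
/-!
Take three rows `a, b, c` of the matrix. Expanding `∑ₖ (aₖ + bₖ)(aₖ + cₖ)` with orthogonality leaves `∑ₖ aₖ² = n`,
while each summand is `4` when `aₖ = bₖ = cₖ` and `0` otherwise; hence `n` is four times the number
of columns on which the three rows agree.
-/

open Matrix Finset

section SignVector

variable {R : Type*} [CommRing R]

theorem add_eq_zero_of_ne_of_sign {x y : R} (hx : x = 1 ∨ x = -1) (hy : y = 1 ∨ y = -1)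
    (hne : y ≠ x) : x + y = 0 := by
  rcases hx with rfl | rfl <;> rcases hy with rfl | rfl <;> simp_all

theorem add_mul_add_of_sign [DecidableEq R] {x y z : R} (hx : x = 1 ∨ x = -1)
    (hy : y = 1 ∨ y = -1) (hz : z = 1 ∨ z = -1) :
    (x + y) * (x + z) = if y = x ∧ z = x then 4 else 0 := by
  split_ifs with h
  · rw [h.1, h.2]
    have hxx : x * x = 1 := by rcases hx with rfl | rfl <;> norm_num
    linear_combination 4 * hxx
  · rcases not_and_or.mp h with hyx | hzx
    · simp [add_eq_zero_of_ne_of_sign hx hy hyx]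
    · simp [add_eq_zero_of_ne_of_sign hx hz hzx]

variable {ι : Type*} [Fintype ι]

theorem dotProduct_self_of_sign {a : ι → R} (ha : ∀ k, a k = 1 ∨ a k = -1) :
    a ⬝ᵥ a = Fintype.card ι := by
  have hsq : ∀ k, a k * a k = 1 := fun k => by rcases ha k with h | h <;> simp [h]
  simp [dotProduct, hsq]

theorem sum_add_mul_add_eq (a b c : ι → R) :
    ∑ k, (a k + b k) * (a k + c k) = a ⬝ᵥ a + a ⬝ᵥ c + b ⬝ᵥ a + b ⬝ᵥ c := by
  simp only [dotProduct, ← sum_add_distrib]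
  exact sum_congr rfl fun k _ => by ring

theorem four_dvd_card_of_sign_orthogonal [CharZero R] {a b c : ι → R}
    (ha : ∀ k, a k = 1 ∨ a k = -1) (hb : ∀ k, b k = 1 ∨ b k = -1)
    (hc : ∀ k, c k = 1 ∨ c k = -1)
    (hab : a ⬝ᵥ b = 0) (hac : a ⬝ᵥ c = 0) (hbc : b ⬝ᵥ c = 0) :
    4 ∣ Fintype.card ι := by
  classical
  set m := #{k | b k = a k ∧ c k = a k}
  have hexpand : ∑ k, (a k + b k) * (a k + c k) = Fintype.card ι := by
    rw [sum_add_mul_add_eq, dotProduct_self_of_sign ha, hac, dotProduct_comm, hab, hbc]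
    ring
  have hcount : ∑ k, (a k + b k) * (a k + c k) = (4 * m : ℕ) := by
    simp only [fun k => add_mul_add_of_sign (ha k) (hb k) (hc k), sum_ite,
      sum_const, nsmul_eq_mul, m]
    push_cast
    ring
  exact ⟨m, Nat.cast_injective (hexpand.symm.trans hcount)⟩

end SignVector

theorem hadamard_order_div_four (n : ℕ) (H : Matrix (Fin n) (Fin n) ℝ)
    (hpm : ∀ i j, H i j = 1 ∨ H i j = -1)
    (horth : ∀ i j : Fin n, i ≠ j → ∑ k, H i k * H j k = 0)
    (hn : 2 < n) :
    4 ∣ n := by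
  let i₀ : Fin n := ⟨0, by omega⟩
  let i₁ : Fin n := ⟨1, by omega⟩
  let i₂ : Fin n := ⟨2, hn⟩
  have h := four_dvd_card_of_sign_orthogonal (hpm i₀) (hpm i₁) (hpm i₂)
    (horth i₀ i₁ (by simp [i₀, i₁, Fin.ext_iff])) (horth i₀ i₂ (by simp [i₀, i₂, Fin.ext_iff]))
    (horth i₁ i₂ (by simp [i₁, i₂, Fin.ext_iff]))
  simpa using h
end

section
/- Let q ≡ 3 (mod 4) be a prime power. Then there exists a skew Hadamard matrix of order q + 1 (Paley's first construction). -/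
/-!
Border the Jacobsthal matrix `Q = (χ (b - a))_{a,b}` of a finite field of order `q` to
`H = [[1, 1ᵀ], [-1, Q + 1]]`. Since `q ≡ 3 [MOD 4]`, `χ (-1) = -1`, so `Q` is skew-symmetric and
`H + Hᵀ = 2`. The rows of `Q` sum to `0` because `χ` is a nontrivial character, and two distinct
rows have inner product `-1`: the affine substitution `c = a + (b - a) x` turns
`∑ c, χ (c - a) χ (c - b)` into `χ (-1)` times the Jacobi sum `J(χ, χ) = -χ (-1)`.
Hence `Q Qᵀ = q - J` with `J` the all-ones matrix, and multiplying out the blocks gives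
`H Hᵀ = q + 1`.
-/

open Finset Matrix

section QuadraticChar

variable {F : Type*} [Field F] [Fintype F]

theorem ringChar_ne_two_of_card_mod_four (hF : Fintype.card F % 4 = 3) : ringChar F ≠ 2 :=
  fun h => by have := FiniteField.even_card_of_char_two h; omega

variable [DecidableEq F]

theorem quadraticChar_sum_sq : ∑ x : F, quadraticChar F x ^ 2 = Fintype.card F - 1 := by
  calc ∑ x : F, quadraticChar F x ^ 2 = ∑ x ∈ univ.erase 0, quadraticChar F x ^ 2 := by
        rw [sum_erase _ (by simp)]
    _ = ∑ x ∈ univ.erase (0 : F), 1 :=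
        sum_congr rfl fun x hx => quadraticChar_sq_one (ne_of_mem_erase hx)
    _ = Fintype.card F - 1 := by
        simp [card_erase_of_mem, Nat.cast_sub Fintype.card_pos]

theorem quadraticChar_sum_sub_mul_sub (hF : ringChar F ≠ 2) {a b : F} (hab : a ≠ b) :
    ∑ c, quadraticChar F (c - a) * quadraticChar F (c - b) = -1 := by
  have hd : b - a ≠ 0 := sub_ne_zero.mpr hab.symm
  have hsubst : ∀ x, quadraticChar F (a + (b - a) * x - a) * quadraticChar F (a + (b - a) * x - b)
      = quadraticChar F (-1) * (quadraticChar F x * quadraticChar F (1 - x)) := by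
    intro x
    rw [← map_mul, ← map_mul, ← map_mul,
      show (a + (b - a) * x - a) * (a + (b - a) * x - b) = (b - a) ^ 2 * (-1 * (x * (1 - x))) by
        ring, map_mul, quadraticChar_sq_one' hd, one_mul]
  have hJ := jacobiSum_nontrivial_inv (quadraticChar_ne_one hF)
  rw [(quadraticChar_isQuadratic F).inv] at hJ
  have hbij : Function.Bijective fun x : F => a + (b - a) * x :=
    ((Equiv.mulLeft₀ _ hd).trans (Equiv.addLeft a)).bijective
  calc ∑ c, quadraticChar F (c - a) * quadraticChar F (c - b)
      = ∑ x, quadraticChar F (a + (b - a) * x - a) * quadraticChar F (a + (b - a) * x - b) :=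
        (Fintype.sum_bijective _ hbij _ _ fun _ => rfl).symm
    _ = quadraticChar F (-1) * jacobiSum (quadraticChar F) (quadraticChar F) := by
        simp only [hsubst, jacobiSum, mul_sum]
    _ = -1 := by
        rw [hJ, mul_neg, ← sq, quadraticChar_sq_one (neg_ne_zero.mpr one_ne_zero)]

end QuadraticChar

namespace Matrix

def IsSkewHadamard {ι R : Type*} [Fintype ι] [DecidableEq ι] [Ring R] (H : Matrix ι ι R) : Prop :=
  (∀ i j, H i j = 1 ∨ H i j = -1) ∧ H * Hᵀ = (Fintype.card ι : R) • 1 ∧ H + Hᵀ = (2 : R) • 1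

theorem IsSkewHadamard.reindex {ι κ R : Type*} [Fintype ι] [DecidableEq ι] [Fintype κ]
    [DecidableEq κ] [Ring R] {H : Matrix ι ι R} (hH : H.IsSkewHadamard) (e : ι ≃ κ) :
    (reindex e e H).IsSkewHadamard := by
  obtain ⟨hentries, horth, hskew⟩ := hH
  refine ⟨fun i j => hentries _ _, ?_, ?_⟩
  · rw [transpose_reindex, reindex_apply, reindex_apply, submatrix_mul_equiv, horth,
      Fintype.card_congr e]
    ext i j
    simp [one_apply]
  · have hadd : H.submatrix e.symm e.symm + Hᵀ.submatrix e.symm e.symm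
        = (H + Hᵀ).submatrix e.symm e.symm := rfl
    rw [transpose_reindex, reindex_apply, reindex_apply, hadd, hskew]
    ext i j
    simp [one_apply]

end Matrix

section Paley

variable (F R : Type*) [Field F] [Fintype F] [DecidableEq F] [CommRing R]

def jacobsthalMatrix : Matrix F F R := of fun a b => (quadraticChar F (b - a) : R)

def paleyMatrix : Matrix (Unit ⊕ F) (Unit ⊕ F) R :=
  fromBlocks 1 (of fun _ _ => 1) (-(of fun _ _ => 1)ᵀ) (jacobsthalMatrix F R + 1)

variable {F R}

theorem jacobsthalMatrix_transpose (hF : Fintype.card F % 4 = 3) :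
    (jacobsthalMatrix F R)ᵀ = -jacobsthalMatrix F R := by
  have hneg : quadraticChar F (-1) = -1 :=
    quadraticChar_neg_one_iff_not_isSquare.mpr (by simpa [FiniteField.isSquare_neg_one_iff])
  ext a b
  simp only [transpose_apply, jacobsthalMatrix, of_apply, Matrix.neg_apply]
  rw [← neg_sub, neg_eq_neg_one_mul, map_mul, hneg]
  push_cast
  ring

theorem jacobsthalMatrix_mul_ones (hF : ringChar F ≠ 2) {ι : Type*} :
    jacobsthalMatrix F R * (of fun _ _ => 1 : Matrix F ι R) = 0 := by
  ext a i
  simp only [mul_apply, jacobsthalMatrix, of_apply, mul_one, Matrix.zero_apply, ← Int.cast_sum]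
  have hrow : ∑ c, quadraticChar F (c - a) = 0 :=
    (sum_translate a _).trans (quadraticChar_sum_zero hF)
  rw [hrow, Int.cast_zero]

theorem jacobsthalMatrix_mul_transpose (hF : ringChar F ≠ 2) :
    jacobsthalMatrix F R * (jacobsthalMatrix F R)ᵀ
      = (Fintype.card F : R) • 1 - of fun _ _ => 1 := by
  ext a b
  simp only [mul_apply, transpose_apply, jacobsthalMatrix, of_apply, ← Int.cast_mul,
    ← Int.cast_sum, Matrix.sub_apply, Matrix.smul_apply, one_apply, smul_eq_mul]
  split_ifs with hab
  · subst hab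
    have hdiag : ∑ c, quadraticChar F (c - a) ^ 2 = Fintype.card F - 1 :=
      (sum_translate a _).trans quadraticChar_sum_sq
    simp only [← sq, hdiag]
    push_cast
    ring
  · rw [quadraticChar_sum_sub_mul_sub hF hab]
    simp

theorem paleyMatrix_apply_eq_one_or_neg_one (i j : Unit ⊕ F) :
    paleyMatrix F R i j = 1 ∨ paleyMatrix F R i j = -1 := by
  rcases i with _ | a <;> rcases j with _ | b
  · simp [paleyMatrix]
  · simp [paleyMatrix]
  · simp [paleyMatrix]
  · by_cases hab : a = b
    · simp [paleyMatrix, jacobsthalMatrix, hab]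
    · rcases quadraticChar_dichotomy (sub_ne_zero.mpr (Ne.symm hab)) with h | h <;>
        simp only [paleyMatrix, fromBlocks_apply₂₂, Matrix.add_apply, jacobsthalMatrix, of_apply,
          one_apply_ne hab, add_zero, h, Int.cast_one, Int.cast_neg, true_or, or_true]

theorem paleyMatrix_add_transpose (hF : Fintype.card F % 4 = 3) :
    paleyMatrix F R + (paleyMatrix F R)ᵀ = (2 : R) • 1 := by
  rw [paleyMatrix, fromBlocks_transpose, fromBlocks_add, ← fromBlocks_one, fromBlocks_smul,
    transpose_add, jacobsthalMatrix_transpose hF]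
  simp only [transpose_one, transpose_neg, transpose_transpose]
  congr 1 <;> module

theorem paleyMatrix_mul_transpose (hF : Fintype.card F % 4 = 3) :
    paleyMatrix F R * (paleyMatrix F R)ᵀ = ((Fintype.card F + 1 : ℕ) : R) • 1 := by
  have hchar := ringChar_ne_two_of_card_mod_four hF
  rw [paleyMatrix, fromBlocks_transpose, fromBlocks_multiply, ← fromBlocks_one, fromBlocks_smul]
  set Q := jacobsthalMatrix F R
  set B : Matrix Unit F R := of fun _ _ => 1
  have hQt : Qᵀ = -Q := jacobsthalMatrix_transpose hF
  have hBtB : Bᵀ * B = of fun _ _ => 1 := by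
    ext; simp [B, mul_apply]
  have hQQ : Q * Q = Bᵀ * B - (Fintype.card F : R) • 1 := by
    have := jacobsthalMatrix_mul_transpose (R := R) hchar
    rwa [hQt, Matrix.mul_neg, neg_eq_iff_eq_neg, neg_sub, ← hBtB] at this
  have hBBt : B * Bᵀ = (Fintype.card F : R) • 1 := by
    ext; simp [B, mul_apply]
  have hQBt : Q * Bᵀ = 0 := jacobsthalMatrix_mul_ones hchar
  have hBQ : B * Q = 0 := by
    rw [← transpose_transpose B, ← neg_neg Q, Matrix.mul_neg, ← hQt, ← transpose_mul, hQBt,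
      transpose_zero, neg_zero]
  simp only [transpose_one, transpose_neg, transpose_add, transpose_transpose, hQt,
    Matrix.mul_one, Matrix.one_mul, Matrix.mul_add, Matrix.add_mul, Matrix.mul_neg,
    Matrix.neg_mul, neg_neg, hQQ, hBBt, hQBt, hBQ]
  congr 1 <;> push_cast <;> module

theorem paleyMatrix_isSkewHadamard (hF : Fintype.card F % 4 = 3) :
    (paleyMatrix F R).IsSkewHadamard := by
  refine ⟨paleyMatrix_apply_eq_one_or_neg_one, ?_, paleyMatrix_add_transpose hF⟩
  rw [Fintype.card_sum, Fintype.card_unit, add_comm]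
  exact paleyMatrix_mul_transpose hF

end Paley

theorem paley_I (q : ℕ) (hq : ∃ p k : ℕ, p.Prime ∧ 0 < k ∧ q = p ^ k)
    (h4 : q % 4 = 3) :
    ∃ H : Matrix (Fin (q + 1)) (Fin (q + 1)) ℝ,
      (∀ i j, H i j = 1 ∨ H i j = -1) ∧
      H * H.transpose = ((q + 1 : ℕ) : ℝ) • (1 : Matrix (Fin (q + 1)) (Fin (q + 1)) ℝ) ∧
      H + H.transpose = (2 : ℝ) • (1 : Matrix (Fin (q + 1)) (Fin (q + 1)) ℝ) := by
  classical
  obtain ⟨p, k, hp, hk, rfl⟩ := hq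
  have : Fact p.Prime := ⟨hp⟩
  let := Fintype.ofFinite (GaloisField p k)
  have hcard : Fintype.card (GaloisField p k) = p ^ k := by
    rw [← Nat.card_eq_fintype_card, GaloisField.card p k hk.ne']
  let e : Unit ⊕ GaloisField p k ≃ Fin (p ^ k + 1) :=
    Fintype.equivFinOfCardEq (by rw [Fintype.card_sum, Fintype.card_unit, hcard, add_comm])
  have hH := (paleyMatrix_isSkewHadamard (R := ℝ) (hcard ▸ h4)).reindex e
  rw [IsSkewHadamard, Fintype.card_fin] at hH
  exact ⟨_, hH⟩
end

section
/- If A, B, C, D are circulant n×n ±1 matrices satisfying A Aᵀ + B Bᵀ + C Cᵀ + D Dᵀ = 4nI, and R is the n×n anti-diagonal permutation matrix, then the Goethals–Seidel array GS(A,B,C,D) = [[A, BR, CR, DR], [-BR, A, DᵀR, -CᵀR], [-CR, -DᵀR, A, BᵀR], [-DR, CᵀR, -BᵀR, A]] is a Hadamard matrix of order 4n. -/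
/-- The 4×4 block matrix built from the 4×4 array of blocks `M`. -/
def blockMat4 {m : Type*} (M : Fin 4 → Fin 4 → Matrix m m ℝ) :
    Matrix (Fin 4 × m) (Fin 4 × m) ℝ :=
  Matrix.of fun p q => M p.1 q.1 p.2 q.2

/-- A matrix indexed by `ZMod n` is circulant. -/
def IsCirculant {n : ℕ} (A : Matrix (ZMod n) (ZMod n) ℝ) : Prop :=
  ∀ k i j : ZMod n, A (i + k) (j + k) = A i j

/-- The anti-diagonal permutation (reversal) matrix on `ZMod n`. -/
def revMat (n : ℕ) : Matrix (ZMod n) (ZMod n) ℝ :=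
  Matrix.of fun i j => if i + j + 1 = 0 then 1 else 0

/-- The Goethals–Seidel array of four matrices. -/
def GSarray {n : ℕ} [NeZero n] (A B C D : Matrix (ZMod n) (ZMod n) ℝ) :
    Matrix (Fin 4 × ZMod n) (Fin 4 × ZMod n) ℝ :=
  blockMat4
    ![![A, B * revMat n, C * revMat n, D * revMat n],
      ![-(B * revMat n), A, D.transpose * revMat n, -(C.transpose * revMat n)],
      ![-(C * revMat n), -(D.transpose * revMat n), A, B.transpose * revMat n],
      ![-(D * revMat n), C.transpose * revMat n, -(B.transpose * revMat n), A]]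

/-!
Circulant matrices over `ZMod n` commute with one another and with their transposes, and the
reversal `R` is a symmetric involution with `R X = Xᵀ R` for circulant `X`. Hence
`(X R)(Y R)ᵀ = X Yᵀ` and `X (Y R)ᵀ = (X R) Yᵀ = X Y R`, so each block of `G Gᵀ`, for `G` the
Goethals–Seidel array, is a signed sum of commuting products: off the diagonal the terms cancel
in pairs, and on the diagonal they add up to `A Aᵀ + B Bᵀ + C Cᵀ + D Dᵀ = 4n I`. The entries of
`G` are entries of `±A, ±B, ±C, ±D` or their transposes, hence `±1`.
-/

open Matrix

namespace IsCirculant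

variable {n : ℕ} {X Y : Matrix (ZMod n) (ZMod n) ℝ}

theorem eq_circulant (h : IsCirculant X) : X = circulant fun k => X k 0 := by
  ext i j
  simpa [circulant_apply, sub_eq_add_neg] using (h (-j) i j).symm

theorem transpose (h : IsCirculant X) : IsCirculant Xᵀ :=
  fun k i j => h k j i

theorem mul_comm [NeZero n] (hX : IsCirculant X) (hY : IsCirculant Y) : X * Y = Y * X := by
  rw [hX.eq_circulant, hY.eq_circulant]
  exact circulant_mul_comm _ _

theorem mul_left_comm [NeZero n] (hX : IsCirculant X) (hY : IsCirculant Y)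
    (Z : Matrix (ZMod n) (ZMod n) ℝ) : X * (Y * Z) = Y * (X * Z) := by
  rw [← Matrix.mul_assoc, hX.mul_comm hY, Matrix.mul_assoc]

end IsCirculant

section revMat

variable {n : ℕ}

theorem revMat_apply_eq_ite (i j : ZMod n) : revMat n i j = if i + j = -1 then 1 else 0 :=
  if_congr ⟨fun h => by linear_combination h, fun h => by linear_combination h⟩ rfl rfl

theorem mul_revMat_apply [NeZero n] {m : Type*} (X : Matrix m (ZMod n) ℝ) (i : m) (j : ZMod n) :
    (X * revMat n) i j = X i (-j - 1) := by
  simp [mul_apply, revMat_apply_eq_ite, ← eq_sub_iff_add_eq, neg_sub_comm]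

theorem revMat_mul_apply [NeZero n] {m : Type*} (X : Matrix (ZMod n) m ℝ) (i : ZMod n) (j : m) :
    (revMat n * X) i j = X (-i - 1) j := by
  simp [mul_apply, revMat_apply_eq_ite, add_comm i, ← eq_sub_iff_add_eq, neg_sub_comm]

theorem revMat_transpose : (revMat n)ᵀ = revMat n := by
  ext i j
  simp only [transpose_apply, revMat, of_apply, add_comm i j]

theorem revMat_mul_revMat [NeZero n] : revMat n * revMat n = 1 := by
  ext i j
  rw [mul_revMat_apply, revMat_apply_eq_ite, one_apply]
  exact if_congr ⟨fun h => by linear_combination h, fun h => by linear_combination h⟩ rfl rfl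

theorem IsCirculant.revMat_mul [NeZero n] {X : Matrix (ZMod n) (ZMod n) ℝ} (h : IsCirculant X) :
    revMat n * X = Xᵀ * revMat n := by
  ext i j
  rw [revMat_mul_apply, mul_revMat_apply, transpose_apply, h.eq_circulant]
  simp only [circulant_apply]
  ring_nf

theorem IsCirculant.revMat_mul_mul [NeZero n] {X : Matrix (ZMod n) (ZMod n) ℝ} (h : IsCirculant X)
    (Z : Matrix (ZMod n) (ZMod n) ℝ) : revMat n * (X * Z) = Xᵀ * (revMat n * Z) := by
  rw [← Matrix.mul_assoc, ← Matrix.mul_assoc, h.revMat_mul]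

end revMat

def IsSignMatrix {m m' : Type*} (M : Matrix m m' ℝ) : Prop :=
  ∀ i j, M i j = 1 ∨ M i j = -1

namespace IsSignMatrix

variable {m m' : Type*} {M : Matrix m m' ℝ}

@[simp]
theorem neg_iff : IsSignMatrix (-M) ↔ IsSignMatrix M := by
  simp only [IsSignMatrix, Matrix.neg_apply, neg_eq_iff_eq_neg, neg_neg, or_comm]

@[simp]
theorem transpose_iff : IsSignMatrix Mᵀ ↔ IsSignMatrix M :=
  ⟨fun h i j => h j i, fun h i j => h j i⟩

theorem mul_revMat {n : ℕ} [NeZero n] {X : Matrix m (ZMod n) ℝ} (h : IsSignMatrix X) :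
    IsSignMatrix (X * revMat n) := fun i j => by
  rw [mul_revMat_apply]
  exact h i _

theorem blockMat4 {N : Fin 4 → Fin 4 → Matrix m m ℝ} (h : ∀ i j, IsSignMatrix (N i j)) :
    IsSignMatrix (blockMat4 N) :=
  fun p q => h p.1 q.1 p.2 q.2

end IsSignMatrix

theorem blockMat4_mul_transpose {m : Type*} [Fintype m] (M N : Fin 4 → Fin 4 → Matrix m m ℝ) :
    blockMat4 M * (blockMat4 N)ᵀ = blockMat4 fun i j => ∑ k, M i k * (N j k)ᵀ := by
  ext p q
  simp only [blockMat4, of_apply, mul_apply, transpose_apply, Fintype.sum_prod_type,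
    Matrix.sum_apply]

theorem blockMat4_ite_smul_one {m : Type*} [DecidableEq m] (c : ℝ) :
    blockMat4 (fun i j => if i = j then c • (1 : Matrix m m ℝ) else 0) = c • 1 := by
  ext ⟨i, k⟩ ⟨j, l⟩
  by_cases hij : i = j <;> simp [blockMat4, one_apply, hij]

section GoethalsSeidel

variable {n : ℕ} [NeZero n] {A B C D : Matrix (ZMod n) (ZMod n) ℝ}

variable (A B C D) in
def gsBlocks : Fin 4 → Fin 4 → Matrix (ZMod n) (ZMod n) ℝ :=
  ![![A, B * revMat n, C * revMat n, D * revMat n],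
    ![-(B * revMat n), A, Dᵀ * revMat n, -(Cᵀ * revMat n)],
    ![-(C * revMat n), -(Dᵀ * revMat n), A, Bᵀ * revMat n],
    ![-(D * revMat n), Cᵀ * revMat n, -(Bᵀ * revMat n), A]]

variable (A B C D) in
theorem GSarray_eq_blockMat4 : GSarray A B C D = blockMat4 (gsBlocks A B C D) := rfl

theorem isSignMatrix_gsBlocks (hA : IsSignMatrix A) (hB : IsSignMatrix B) (hC : IsSignMatrix C)
    (hD : IsSignMatrix D) (i j : Fin 4) : IsSignMatrix (gsBlocks A B C D i j) := by
  fin_cases i <;> fin_cases j <;> simp [gsBlocks, hA, hB, hC, hD, IsSignMatrix.mul_revMat]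

theorem gsBlocks_mul_transpose (hA : IsCirculant A) (hB : IsCirculant B) (hC : IsCirculant C)
    (hD : IsCirculant D) (i j : Fin 4) :
    ∑ k, gsBlocks A B C D i k * (gsBlocks A B C D j k)ᵀ =
      if i = j then A * Aᵀ + B * Bᵀ + C * Cᵀ + D * Dᵀ else 0 := by
  -- Moving every `revMat n` to the right turns each block into a signed sum of products of
  -- circulants (times `revMat n`); the commutation lemmas then act as permutation rules, so
  -- `simp` reaches an AC normal form in which the off-diagonal terms cancel in pairs.
  fin_cases i <;> fin_cases j <;>
    simp [gsBlocks, Fin.sum_univ_four, Matrix.mul_assoc, revMat_transpose, revMat_mul_revMat,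
      IsCirculant.revMat_mul, IsCirculant.revMat_mul_mul, IsCirculant.mul_comm,
      IsCirculant.mul_left_comm, IsCirculant.transpose, hA, hB, hC, hD,
      add_comm, add_left_comm, add_assoc]

end GoethalsSeidel

theorem goethals_seidel (n : ℕ) [NeZero n]
    (A B C D : Matrix (ZMod n) (ZMod n) ℝ)
    (hpm : ∀ M ∈ [A, B, C, D], ∀ i j, M i j = 1 ∨ M i j = -1)
    (hcirc : IsCirculant A ∧ IsCirculant B ∧ IsCirculant C ∧ IsCirculant D)
    (hsum : A * A.transpose + B * B.transpose + C * C.transpose + D * D.transpose =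
      ((4 * n : ℕ) : ℝ) • (1 : Matrix (ZMod n) (ZMod n) ℝ)) :
    (∀ p q, GSarray A B C D p q = 1 ∨ GSarray A B C D p q = -1) ∧
    GSarray A B C D * (GSarray A B C D).transpose =
      ((4 * n : ℕ) : ℝ) • (1 : Matrix (Fin 4 × ZMod n) (Fin 4 × ZMod n) ℝ) := by
  obtain ⟨hA, hB, hC, hD⟩ := hcirc
  have hsign : ∀ M ∈ [A, B, C, D], IsSignMatrix M := hpm
  refine ⟨IsSignMatrix.blockMat4 (isSignMatrix_gsBlocks (hsign A (by simp)) (hsign B (by simp))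
    (hsign C (by simp)) (hsign D (by simp))), ?_⟩
  rw [GSarray_eq_blockMat4, blockMat4_mul_transpose]
  simp_rw [gsBlocks_mul_transpose hA hB hC hD, hsum]
  exact blockMat4_ite_smul_one _
end

section
/- If A, B, C, D are four ±1 sequences of lengths n+p, n+p, n, n that are base sequences (N_A(j)+N_B(j)+N_C(j)+N_D(j)=0 for all j ≥ 1), then T₁ = ½(A+B);0_n, T₂ = ½(A−B);0_n, T₃ = 0_{n+p};½(C+D), T₄ = 0_{n+p};½(C−D) are T-sequences of length 2n+p. -/
/-!
For ±1 entries `a, b`, exactly one of `(a + b) / 2` and `(a - b) / 2` is nonzero, and it is ±1.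
Since `(a + b)(a' + b') + (a - b)(a' - b') = 2(aa' + bb')`, the autocorrelations of `½(A + B)` and
`½(A − B)` add up to half of `N_A + N_B`, and likewise for `C, D`. Padding with zeros changes no
autocorrelation, so the T-sequence sum is half the base-sequence sum; the supports are disjoint
because the first two sequences live on the first `n + p` positions and the last two on the
remaining `n`.
-/

/-- Nonperiodic autocorrelation of a finite integer sequence. -/
def NA (A : List ℤ) (j : ℕ) : ℤ :=
  ∑ i ∈ Finset.range (A.length - j), A.getD i 0 * A.getD (i + j) 0

/-- A sequence with all entries ±1. -/
def IsPM1 (A : List ℤ) : Prop := ∀ x ∈ A, x = 1 ∨ x = -1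

/-- Four `(−1,0,1)` sequences of length `n` are T-sequences if their nonperiodic
autocorrelations sum to zero for all `j ≥ 1` and, at each position, exactly one
of the four entries is nonzero. -/
def IsTSeq (n : ℕ) (T₁ T₂ T₃ T₄ : List ℤ) : Prop :=
  T₁.length = n ∧ T₂.length = n ∧ T₃.length = n ∧ T₄.length = n ∧
  (∀ x ∈ T₁ ++ T₂ ++ T₃ ++ T₄, x = 1 ∨ x = 0 ∨ x = -1) ∧
  (∀ j, 1 ≤ j → NA T₁ j + NA T₂ j + NA T₃ j + NA T₄ j = 0) ∧
  (∀ i < n, ((if T₁.getD i 0 ≠ 0 then 1 else 0) + (if T₂.getD i 0 ≠ 0 then 1 else 0) +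
      (if T₃.getD i 0 ≠ 0 then 1 else 0) + (if T₄.getD i 0 ≠ 0 then 1 else 0) : ℕ) = 1)

namespace List

variable {α β γ : Type*}

theorem getD_append_replicate (l : List α) (d : α) (m i : ℕ) :
    (l ++ replicate m d).getD i d = l.getD i d := by
  grind

theorem getD_replicate_append (l : List α) (d : α) (m i : ℕ) :
    (replicate m d ++ l).getD i d = if i < m then d else l.getD (i - m) d := by
  grind

theorem getD_zipWith (f : α → β → γ) {l : List α} {l' : List β} {i : ℕ} (a : α) (b : β)
    (c : γ) (hi : i < l.length) (hi' : i < l'.length) :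
    (zipWith f l l').getD i c = f (l.getD i a) (l'.getD i b) := by
  grind

theorem forall_mem_zipWith {f : α → β → γ} {P : γ → Prop} {l : List α} {l' : List β}
    (h : ∀ a ∈ l, ∀ b ∈ l', P (f a b)) : ∀ x ∈ zipWith f l l', P x := by
  intro x hx
  obtain ⟨i, hi, rfl⟩ := mem_iff_getElem.mp hx
  rw [getElem_zipWith]
  exact h _ (getElem_mem _) _ (getElem_mem _)

end List

theorem NA_eq_sum_range_of_le (X : List ℤ) (j : ℕ) {N : ℕ} (hN : X.length - j ≤ N) :
    NA X j = ∑ i ∈ Finset.range N, X.getD i 0 * X.getD (i + j) 0 := by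
  refine Finset.sum_subset (Finset.range_subset_range.mpr hN) fun i _ hi => ?_
  rw [Finset.mem_range, not_lt] at hi
  rw [List.getD_eq_default X 0 (n := i + j) (by omega), mul_zero]

theorem NA_append_replicate_zero (X : List ℤ) (m j : ℕ) :
    NA (X ++ List.replicate m 0) j = NA X j := by
  rw [NA_eq_sum_range_of_le X j (N := (X ++ List.replicate m 0).length - j) (by simp; omega), NA]
  simp only [List.getD_append_replicate]

theorem NA_replicate_zero_append (Y : List ℤ) (m j : ℕ) :
    NA (List.replicate m 0 ++ Y) j = NA Y j := by
  rw [NA_eq_sum_range_of_le _ j (N := m + (Y.length - j)) (by simp; omega), Finset.sum_range_add,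
    Finset.sum_eq_zero fun i hi => ?_, zero_add]
  · simp only [NA, List.getD_replicate_append]
    simp [Nat.add_assoc]
  · rw [List.getD_replicate_append, if_pos (Finset.mem_range.mp hi), zero_mul]

theorem two_mul_half_add_mul_add_half_sub_mul {a b a' b' : ℤ} (h : Even (a + b))
    (h' : Even (a' + b')) :
    2 * ((a + b) / 2 * ((a' + b') / 2) + (a - b) / 2 * ((a' - b') / 2)) = a * a' + b * b' := by
  obtain ⟨k, hk⟩ := h
  obtain ⟨k', hk'⟩ := h'
  obtain rfl : a = k + k - b := by omega
  obtain rfl : a' = k' + k' - b' := by omega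
  rw [show (k + k - b + b) / 2 = k by omega, show (k + k - b - b) / 2 = k - b by omega,
    show (k' + k' - b' + b') / 2 = k' by omega, show (k' + k' - b' - b') / 2 = k' - b' by omega]
  ring

theorem two_mul_NA_half_add_add_NA_half_sub {A B : List ℤ} (hAB : A.length = B.length)
    (hpar : ∀ i < A.length, Even (A.getD i 0 + B.getD i 0)) (j : ℕ) :
    2 * (NA (List.zipWith (fun a b => (a + b) / 2) A B) j +
      NA (List.zipWith (fun a b => (a - b) / 2) A B) j) = NA A j + NA B j := by
  simp only [NA, List.length_zipWith, ← hAB, min_self, ← Finset.sum_add_distrib, Finset.mul_sum]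
  refine Finset.sum_congr rfl fun i hi => ?_
  have hi₁ : i < A.length := by rw [Finset.mem_range] at hi; omega
  have hi₂ : i + j < A.length := by rw [Finset.mem_range] at hi; omega
  simp only [List.getD_zipWith _ 0 0 _ hi₁ (hAB ▸ hi₁),
    List.getD_zipWith _ 0 0 _ hi₂ (hAB ▸ hi₂)]
  exact two_mul_half_add_mul_add_half_sub_mul (hpar i hi₁) (hpar (i + j) hi₂)

section PlusMinusOne

variable {a b : ℤ}

theorem half_add_eq_one_or_zero_or_neg_one (ha : a = 1 ∨ a = -1) (hb : b = 1 ∨ b = -1) :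
    (a + b) / 2 = 1 ∨ (a + b) / 2 = 0 ∨ (a + b) / 2 = -1 := by
  rcases ha with rfl | rfl <;> rcases hb with rfl | rfl <;> decide

theorem half_sub_eq_one_or_zero_or_neg_one (ha : a = 1 ∨ a = -1) (hb : b = 1 ∨ b = -1) :
    (a - b) / 2 = 1 ∨ (a - b) / 2 = 0 ∨ (a - b) / 2 = -1 := by
  rcases ha with rfl | rfl <;> rcases hb with rfl | rfl <;> decide

theorem ite_half_add_ne_zero_add_ite_half_sub_ne_zero (ha : a = 1 ∨ a = -1)
    (hb : b = 1 ∨ b = -1) :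
    ((if (a + b) / 2 ≠ 0 then 1 else 0) + (if (a - b) / 2 ≠ 0 then 1 else 0) : ℕ) = 1 := by
  rcases ha with rfl | rfl <;> rcases hb with rfl | rfl <;> decide

end PlusMinusOne

namespace IsPM1

variable {A B : List ℤ}

theorem odd (hA : IsPM1 A) {x : ℤ} (hx : x ∈ A) : Odd x := by
  rcases hA x hx with rfl | rfl <;> decide

theorem getD_eq_one_or_neg_one (hA : IsPM1 A) {i : ℕ} (hi : i < A.length) :
    A.getD i 0 = 1 ∨ A.getD i 0 = -1 :=
  List.getD_eq_getElem A 0 hi ▸ hA _ (List.getElem_mem hi)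

theorem even_getD_add_getD (hA : IsPM1 A) (hB : IsPM1 B) (hAB : A.length = B.length) {i : ℕ}
    (hi : i < A.length) : Even (A.getD i 0 + B.getD i 0) := by
  rw [List.getD_eq_getElem A 0 hi, List.getD_eq_getElem B 0 (hAB ▸ hi)]
  exact (hA.odd (List.getElem_mem _)).add_odd (hB.odd (List.getElem_mem _))

theorem forall_mem_zipWith_half_add (hA : IsPM1 A) (hB : IsPM1 B) :
    ∀ x ∈ List.zipWith (fun a b => (a + b) / 2) A B, x = 1 ∨ x = 0 ∨ x = -1 :=
  List.forall_mem_zipWith fun a ha b hb => half_add_eq_one_or_zero_or_neg_one (hA a ha) (hB b hb)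

theorem forall_mem_zipWith_half_sub (hA : IsPM1 A) (hB : IsPM1 B) :
    ∀ x ∈ List.zipWith (fun a b => (a - b) / 2) A B, x = 1 ∨ x = 0 ∨ x = -1 :=
  List.forall_mem_zipWith fun a ha b hb => half_sub_eq_one_or_zero_or_neg_one (hA a ha) (hB b hb)

theorem ite_getD_half_add_ne_zero_add_ite_getD_half_sub_ne_zero (hA : IsPM1 A) (hB : IsPM1 B)
    (hAB : A.length = B.length) (i : ℕ) :
    ((if (List.zipWith (fun a b => (a + b) / 2) A B).getD i 0 ≠ 0 then 1 else 0) +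
      (if (List.zipWith (fun a b => (a - b) / 2) A B).getD i 0 ≠ 0 then 1 else 0) : ℕ) =
      if i < A.length then 1 else 0 := by
  by_cases hi : i < A.length
  · simp only [List.getD_zipWith _ 0 0 _ hi (hAB ▸ hi), if_pos hi]
    exact ite_half_add_ne_zero_add_ite_half_sub_ne_zero (hA.getD_eq_one_or_neg_one hi)
      (hB.getD_eq_one_or_neg_one (hAB ▸ hi))
  · rw [List.getD_eq_default _ _ (by simp; omega), List.getD_eq_default _ _ (by simp; omega),
      if_neg hi]
    rfl

end IsPM1

theorem t_sequences_from_base_sequences (n p : ℕ) (A B C D : List ℤ)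
    (hA : A.length = n + p) (hB : B.length = n + p) (hC : C.length = n) (hD : D.length = n)
    (hpm : IsPM1 A ∧ IsPM1 B ∧ IsPM1 C ∧ IsPM1 D)
    (hbase : ∀ j, 1 ≤ j → NA A j + NA B j + NA C j + NA D j = 0) :
    IsTSeq (2 * n + p)
      (List.zipWith (fun a b => (a + b) / 2) A B ++ List.replicate n 0)
      (List.zipWith (fun a b => (a - b) / 2) A B ++ List.replicate n 0)
      (List.replicate (n + p) 0 ++ List.zipWith (fun c d => (c + d) / 2) C D)
      (List.replicate (n + p) 0 ++ List.zipWith (fun c d => (c - d) / 2) C D) := by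
  obtain ⟨hpA, hpB, hpC, hpD⟩ := hpm
  have hAB : A.length = B.length := hA.trans hB.symm
  have hCD : C.length = D.length := hC.trans hD.symm
  have hzero : ∀ m, ∀ x ∈ List.replicate m (0 : ℤ), x = 1 ∨ x = 0 ∨ x = -1 :=
    fun _ _ hx => Or.inr (Or.inl (List.eq_of_mem_replicate hx))
  refine ⟨by simp [hA, hB]; omega, by simp [hA, hB]; omega, by simp [hC, hD]; omega,
    by simp [hC, hD]; omega, ?_, fun j hj => ?_, fun i hi => ?_⟩
  · simp only [List.forall_mem_append]
    exact ⟨⟨⟨⟨hpA.forall_mem_zipWith_half_add hpB, hzero n⟩,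
      hpA.forall_mem_zipWith_half_sub hpB, hzero n⟩, hzero (n + p),
      hpC.forall_mem_zipWith_half_add hpD⟩, hzero (n + p), hpC.forall_mem_zipWith_half_sub hpD⟩
  · have hAB' := two_mul_NA_half_add_add_NA_half_sub hAB
      (fun i hi => hpA.even_getD_add_getD hpB hAB hi) j
    have hCD' := two_mul_NA_half_add_add_NA_half_sub hCD
      (fun i hi => hpC.even_getD_add_getD hpD hCD hi) j
    rw [NA_append_replicate_zero, NA_append_replicate_zero, NA_replicate_zero_append,
      NA_replicate_zero_append]
    linarith [hbase j hj]
  · simp only [List.getD_append_replicate, List.getD_replicate_append]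
    rw [add_assoc, hpA.ite_getD_half_add_ne_zero_add_ite_getD_half_sub_ne_zero hpB hAB]
    by_cases h : i < n + p
    · simp [h, hA]
    · simp only [h, if_false, hA]
      rw [hpC.ite_getD_half_add_ne_zero_add_ite_getD_half_sub_ne_zero hpD hCD, if_pos (by omega)]
end

section
/- If X, Y, Z, W are Turyn type sequences of lengths n, n, n, n−1 (±1 sequences with N_X(j) + N_Y(j) + 2N_Z(j) + 2N_W(j) = 0 for all j ≥ 1), then A = Z;W, B = Z;−W, C = X, D = Y are base sequences of lengths 2n−1, 2n−1, n, n. -/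
/-- Base sequences of lengths `n+p, n+p, n, n`. -/
def IsBaseSeq (n p : ℕ) (A B C D : List ℤ) : Prop :=
  A.length = n + p ∧ B.length = n + p ∧ C.length = n ∧ D.length = n ∧
  IsPM1 A ∧ IsPM1 B ∧ IsPM1 C ∧ IsPM1 D ∧
  ∀ j, 1 ≤ j → NA A j + NA B j + NA C j + NA D j = 0

/-!
Writing `Z ; V` for a concatenation, its autocorrelation splits as
`N_{Z;V}(j) = N_Z(j) + N_V(j) + K(j)`, where the cross term `K(j)` collects the products of an
entry of `Z` with an entry of `V`. The cross term is linear in `V`, so it cancels in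
`N_{Z;W}(j) + N_{Z;−W}(j) = 2 N_Z(j) + 2 N_W(j)`, and the Turyn condition becomes the base sequence
condition for `Z;W, Z;−W, X, Y`.
-/

open Finset

/-- The cross term `K(j)` of `N_{A;B}(j)`: the products of an entry of `A` with an entry of `B`. -/
def crossNA (A B : List ℤ) (j : ℕ) : ℤ :=
  ∑ i ∈ range A.length,
    A.getD i 0 * if A.length ≤ i + j then B.getD (i + j - A.length) 0 else 0

lemma NA_eq_sum_range (A : List ℤ) (j : ℕ) {N : ℕ} (hN : A.length - j ≤ N) :
    NA A j = ∑ i ∈ range N, A.getD i 0 * A.getD (i + j) 0 := by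
  refine sum_subset (range_subset_range.2 hN) fun i _ hi => ?_
  rw [List.getD_eq_default (n := i + j) _ _ (by simp at hi; omega), mul_zero]

lemma List.getD_append_eq_add {α : Type*} [AddZeroClass α] (A B : List α) (k : ℕ) :
    (A ++ B).getD k 0 = A.getD k 0 + if A.length ≤ k then B.getD (k - A.length) 0 else 0 := by
  split_ifs with h
  · rw [List.getD_append_right _ _ _ _ h, List.getD_eq_default _ _ h, zero_add]
  · rw [List.getD_append _ _ _ _ (by omega), add_zero]

lemma NA_append (A B : List ℤ) (j : ℕ) :
    NA (A ++ B) j = NA A j + NA B j + crossNA A B j := by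
  rw [NA_eq_sum_range _ j (N := A.length + B.length) (by simp), sum_range_add,
    NA_eq_sum_range A j (N := A.length) (by omega),
    NA_eq_sum_range B j (N := B.length) (by omega), crossNA]
  have hA : ∀ i ∈ range A.length, (A ++ B).getD i 0 * (A ++ B).getD (i + j) 0 =
      A.getD i 0 * A.getD (i + j) 0 +
        A.getD i 0 * if A.length ≤ i + j then B.getD (i + j - A.length) 0 else 0 := by
    intro i hi
    rw [List.getD_append _ _ _ _ (mem_range.1 hi), List.getD_append_eq_add, mul_add]
  have hB : ∀ k ∈ range B.length, (A ++ B).getD (A.length + k) 0 *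
      (A ++ B).getD (A.length + k + j) 0 = B.getD k 0 * B.getD (k + j) 0 := by
    intro k _
    rw [List.getD_append_right _ _ _ _ (by omega), List.getD_append_right _ _ _ _ (by omega)]
    congr 2 <;> omega
  rw [sum_congr rfl hA, sum_congr rfl hB, sum_add_distrib]
  ring

lemma List.getD_map_neg {α : Type*} [NegZeroClass α] (B : List α) (k : ℕ) :
    (B.map (fun w => -w)).getD k 0 = -B.getD k 0 := by
  simpa using List.getD_map (l := B) (d := 0) (n := k) (fun w => -w)

lemma crossNA_map_neg (A B : List ℤ) (j : ℕ) :
    crossNA A (B.map (fun w => -w)) j = -crossNA A B j := by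
  simp only [crossNA, List.getD_map_neg, ← sum_neg_distrib]
  refine sum_congr rfl fun i _ => ?_
  split_ifs <;> ring

lemma NA_map_neg (A : List ℤ) (j : ℕ) : NA (A.map (fun w => -w)) j = NA A j := by
  simp only [NA, List.length_map, List.getD_map_neg, neg_mul_neg]

lemma NA_append_add_NA_append_map_neg (A B : List ℤ) (j : ℕ) :
    NA (A ++ B) j + NA (A ++ B.map (fun w => -w)) j = 2 * NA A j + 2 * NA B j := by
  rw [NA_append, NA_append, crossNA_map_neg, NA_map_neg]
  ring

lemma IsPM1.append {A B : List ℤ} (hA : IsPM1 A) (hB : IsPM1 B) : IsPM1 (A ++ B) := by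
  intro x hx
  rcases List.mem_append.1 hx with h | h
  exacts [hA x h, hB x h]

lemma IsPM1.map_neg {A : List ℤ} (hA : IsPM1 A) : IsPM1 (A.map (fun w => -w)) := by
  intro x hx
  obtain ⟨a, ha, rfl⟩ := List.mem_map.1 hx
  rcases hA a ha with rfl | rfl <;> simp

theorem base_sequences_from_turyn_type_general (n : ℕ) (X Y Z W : List ℤ)
    (hX : X.length = n) (hY : Y.length = n) (hZ : Z.length = n) (hW : W.length = n - 1)
    (hpm : IsPM1 X ∧ IsPM1 Y ∧ IsPM1 Z ∧ IsPM1 W)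
    (hturyn : ∀ j, 1 ≤ j → NA X j + NA Y j + 2 * NA Z j + 2 * NA W j = 0) :
    IsBaseSeq n (n - 1) (Z ++ W) (Z ++ W.map (fun w => -w)) X Y := by
  obtain ⟨hpX, hpY, hpZ, hpW⟩ := hpm
  refine ⟨by simp [hZ, hW], by simp [hZ, hW], hX, hY, hpZ.append hpW,
    hpZ.append hpW.map_neg, hpX, hpY, fun j hj => ?_⟩
  linarith [hturyn j hj, NA_append_add_NA_append_map_neg Z W j]

theorem base_sequences_from_turyn_type (n : ℕ) (hn : 1 ≤ n) (X Y Z W : List ℤ)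
    (hX : X.length = n) (hY : Y.length = n) (hZ : Z.length = n) (hW : W.length = n - 1)
    (hpm : IsPM1 X ∧ IsPM1 Y ∧ IsPM1 Z ∧ IsPM1 W)
    (hturyn : ∀ j, 1 ≤ j → NA X j + NA Y j + 2 * NA Z j + 2 * NA W j = 0) :
    IsBaseSeq n (n - 1) (Z ++ W) (Z ++ W.map (fun w => -w)) X Y :=
  base_sequences_from_turyn_type_general n X Y Z W hX hY hZ hW hpm hturyn
end

section
/- Let G be the additive group of the Galois field GF(q) where q ≡ 3 (mod 4) is a prime power, q = 2m+1, and let A = B be the set of nonzero squares in GF(q). Then A and B are complementary difference sets in G: |A| = m; α ∈ A implies −α ∉ A; and for each nonzero δ ∈ G, the equations δ = α₁ − α₂ (α₁,α₂ ∈ A) and δ = β₁ − β₂ (β₁,β₂ ∈ B) have altogether m−1 solution pairs. -/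
/-- The set of nonzero squares of a field. -/
def nonzeroSquares (F : Type*) [Field F] : Set F := {x : F | x ≠ 0 ∧ IsSquare x}

/-!
Write `A` for the nonzero squares and `N(δ)` for the number of pairs in `A × A` with difference
`δ`. Multiplying by `s ∈ A` permutes `A`, so `N(sδ) = N(δ)`; swapping the pair gives
`N(-δ) = N(δ)`. Since `-1` is a nonsquare, each `x ≠ 0` has exactly one of `x`, `-x` in `A`; hence
`|A| = (q - 1) / 2 = m` and `N` is constant on nonzero `δ`. Counting the `m(m - 1)` pairs of distinct
elements of `A` by their difference gives `2m · N = m(m - 1)`, i.e. `2N = m - 1`.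
-/

open Finset Pointwise

section DifferencePairs

variable {G : Type*} [AddGroup G]

def differencePairs (A : Set G) (δ : G) : Set (G × G) :=
  {p | p.1 ∈ A ∧ p.2 ∈ A ∧ p.1 - p.2 = δ}

theorem ncard_differencePairs_neg (A : Set G) (δ : G) :
    (differencePairs A (-δ)).ncard = (differencePairs A δ).ncard := by
  rw [← Set.ncard_preimage_of_injective_subset_range Prod.swap_injective
    (by simp [Prod.swap_surjective.range_eq])]
  congr 1
  ext p
  simp only [differencePairs, Set.mem_preimage, Set.mem_ofPred_eq, Prod.fst_swap, Prod.snd_swap,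
    ← neg_sub p.1, neg_inj]
  tauto

theorem ncard_differencePairs_zero (A : Set G) : (differencePairs A 0).ncard = A.ncard := by
  have hdiag : (fun a : G => (a, a)).Injective := fun _ _ h => congrArg Prod.fst h
  rw [← Set.ncard_image_of_injective A hdiag]
  congr 1
  ext ⟨a, b⟩
  simp only [differencePairs, Set.mem_ofPred_eq, sub_eq_zero, Set.mem_image, Prod.mk.injEq]
  constructor
  · rintro ⟨ha, -, rfl⟩; exact ⟨a, ha, rfl, rfl⟩
  · rintro ⟨c, hc, rfl, rfl⟩; exact ⟨hc, hc, rfl⟩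

theorem sum_ncard_differencePairs [Fintype G] (A : Set G) :
    ∑ δ, (differencePairs A δ).ncard = A.ncard ^ 2 := by
  classical
  rw [sq, ← Set.ncard_prod, Set.ncard_eq_toFinset_card',
    card_eq_sum_card_fiberwise (f := fun p : G × G => p.1 - p.2) (t := univ) (by simp)]
  refine sum_congr rfl fun δ _ => ?_
  rw [← Set.ncard_coe_finset]
  congr 1
  ext p
  simp [differencePairs, and_assoc]

end DifferencePairs

theorem ncard_differencePairs_unit_mul {R : Type*} [Ring R] {A : Set R} (s : Rˣ)
    (hA : ∀ a, (s : R) * a ∈ A ↔ a ∈ A) (δ : R) :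
    (differencePairs A (s * δ)).ncard = (differencePairs A δ).ncard := by
  let e := (Units.mulLeft s).prodCongr (Units.mulLeft s)
  rw [← Set.ncard_preimage_of_injective_subset_range e.injective (by simp)]
  congr 1
  ext p
  simp [e, differencePairs, hA, ← mul_sub]

section NonzeroSquares

variable {F : Type*} [Field F]

theorem mul_mem_nonzeroSquares_iff {s : F} (hs : s ∈ nonzeroSquares F) (a : F) :
    s * a ∈ nonzeroSquares F ↔ a ∈ nonzeroSquares F := by
  obtain ⟨hs0, hsq⟩ := hs
  refine ⟨fun ⟨h0, hsa⟩ => ⟨right_ne_zero_of_mul h0, ?_⟩,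
    fun ⟨ha0, ha⟩ => ⟨mul_ne_zero hs0 ha0, hsq.mul ha⟩⟩
  simpa [hs0] using hsq.inv.mul hsa

theorem neg_notMem_nonzeroSquares (hF : ¬IsSquare (-1 : F)) {a : F}
    (ha : a ∈ nonzeroSquares F) : -a ∉ nonzeroSquares F := fun ⟨_, hna⟩ => hF <| by
  simpa [ha.1] using hna.mul ha.2.inv

variable [Fintype F]

theorem neg_mem_nonzeroSquares_iff (hF : ¬IsSquare (-1 : F)) {x : F} (hx : x ≠ 0) :
    -x ∈ nonzeroSquares F ↔ x ∉ nonzeroSquares F := by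
  classical
  have hχ : quadraticChar F (-x) = -quadraticChar F x := by
    rw [neg_eq_neg_one_mul, map_mul, quadraticChar_neg_one_iff_not_isSquare.mpr hF, neg_one_mul]
  simp only [nonzeroSquares, Set.mem_ofPred_eq, ne_eq, neg_eq_zero, hx, not_false_eq_true,
    true_and]
  rw [← quadraticChar_one_iff_isSquare hx, ← quadraticChar_one_iff_isSquare (neg_ne_zero.mpr hx),
    hχ, neg_eq_iff_eq_neg, quadraticChar_eq_neg_one_iff_not_one hx]

theorem two_mul_ncard_nonzeroSquares (hF : ¬IsSquare (-1 : F)) :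
    2 * (nonzeroSquares F).ncard = Fintype.card F - 1 := by
  have hunion : nonzeroSquares F ∪ -nonzeroSquares F = {0}ᶜ := by
    ext x
    by_cases hx : x = 0
    · simp [hx, nonzeroSquares]
    · simp [hx, Set.mem_neg, neg_mem_nonzeroSquares_iff hF hx, em]
  have hdisj : Disjoint (nonzeroSquares F) (-nonzeroSquares F) :=
    Set.disjoint_left.mpr fun _ ha hna => neg_notMem_nonzeroSquares hF ha hna
  rw [two_mul]
  nth_rw 2 [← Set.ncard_neg]
  rw [← Set.ncard_union_eq hdisj, hunion, Set.ncard_compl, Set.ncard_singleton,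
    Nat.card_eq_fintype_card]

theorem ncard_differencePairs_nonzeroSquares (hF : ¬IsSquare (-1 : F)) {δ : F} (hδ : δ ≠ 0) :
    (differencePairs (nonzeroSquares F) δ).ncard =
      (differencePairs (nonzeroSquares F) 1).ncard := by
  have scale {s : F} (hs : s ∈ nonzeroSquares F) :
      (differencePairs (nonzeroSquares F) s).ncard =
        (differencePairs (nonzeroSquares F) 1).ncard := by
    simpa using ncard_differencePairs_unit_mul (Units.mk0 s hs.1) (mul_mem_nonzeroSquares_iff hs) 1
  by_cases hδS : δ ∈ nonzeroSquares F
  · exact scale hδS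
  · rw [← ncard_differencePairs_neg, scale ((neg_mem_nonzeroSquares_iff hF hδ).mpr hδS)]

theorem two_mul_ncard_differencePairs_nonzeroSquares (hF : ¬IsSquare (-1 : F)) {δ : F}
    (hδ : δ ≠ 0) :
    2 * (differencePairs (nonzeroSquares F) δ).ncard = (nonzeroSquares F).ncard - 1 := by
  classical
  set m := (nonzeroSquares F).ncard
  set N := (differencePairs (nonzeroSquares F) 1).ncard
  have hm : 0 < m := (Set.ncard_pos).mpr ⟨1, one_ne_zero, IsSquare.one⟩
  have hsum : m + (Fintype.card F - 1) * N = m * m := by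
    rw [← sq, ← sum_ncard_differencePairs, ← add_sum_erase _ _ (mem_univ 0),
      ncard_differencePairs_zero,
      sum_congr rfl fun ε hε => ncard_differencePairs_nonzeroSquares hF (ne_of_mem_erase hε),
      sum_const, card_erase_of_mem (mem_univ 0), card_univ, smul_eq_mul]
  rw [← two_mul_ncard_nonzeroSquares hF] at hsum
  have hN : 2 * N + 1 = m := Nat.eq_of_mul_eq_mul_left hm (by rw [← hsum]; ring)
  rw [ncard_differencePairs_nonzeroSquares hF hδ]
  omega

end NonzeroSquares

theorem paley_complementary_difference_sets (q m : ℕ) (F : Type*) [Field F] [Fintype F]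
    (hcard : Fintype.card F = q) (h4 : q % 4 = 3) (hm : q = 2 * m + 1) :
    (nonzeroSquares F).ncard = m ∧
    (∀ a ∈ nonzeroSquares F, -a ∉ nonzeroSquares F) ∧
    ∀ δ : F, δ ≠ 0 →
      {p : F × F | p.1 ∈ nonzeroSquares F ∧ p.2 ∈ nonzeroSquares F ∧ p.1 - p.2 = δ}.ncard +
      {p : F × F | p.1 ∈ nonzeroSquares F ∧ p.2 ∈ nonzeroSquares F ∧ p.1 - p.2 = δ}.ncard
        = m - 1 := by
  have hF : ¬IsSquare (-1 : F) := fun h => FiniteField.isSquare_neg_one_iff.mp h (hcard ▸ h4)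
  have hcardS := two_mul_ncard_nonzeroSquares hF
  refine ⟨by omega, fun a ha => neg_notMem_nonzeroSquares hF ha, fun δ hδ => ?_⟩
  rw [← two_mul]
  exact (two_mul_ncard_differencePairs_nonzeroSquares hF hδ).trans (by omega)
end

section
/- Let A, B be complementary difference sets of size m in an abelian group G of order 2m+1. Then the (4m+4)×(4m+4) matrix H = I + S, where S is defined as in the Blatt–Szekeres construction (S_{ij} = +1 iff γ_j − γ_i ∈ A on the first block, S_{i,2m+1+j} = +1 iff γ_j − γ_i ∈ B on the off-diagonal block, with the corresponding skew-symmetric completion and bordering rows/columns, and zero diagonal), is a skew Hadamard matrix of order 4(m+1). -/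
/-!
In block form `S = [[C, E], [-Eᵀ, D]]` with `C = [[P, Q], [-Qᵀ, -P]]`, where `Q = M_B`,
`P = M_A + I` for the group matrix `M_X = (χ_X (h - g))_{g,h}` of the `±1`-indicator `χ_X` of `X`,
`E` holds the two border columns and `D = [[0, -1], [1, 0]]`. Since `A` and `-A` partition
`G ∖ {0}`, `P` is skew, hence so is `S`, and `H Hᵀ = (I + S)(I - S) = I + S Sᵀ`.
Group matrices of an abelian group commute, which makes `C Cᵀ` block diagonal with both blocks
equal to `P Pᵀ + Q Qᵀ`. The difference-set condition says that the autocorrelations of `χ_A` and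
`χ_B` add up to `-2` at every `δ ≠ 0`, i.e. `P Pᵀ + Q Qᵀ = (4m + 3) I - 2J`, and the border adds
`E Eᵀ = 2 (J ⊕ J)`. The off-diagonal blocks of `S Sᵀ` vanish because `P` and `Q` have row sums
`0` and `-1`.
-/

/-- The skew-symmetric core `S` of the Blatt–Szekeres construction, indexed by
`(G ⊕ G) ⊕ Fin 2`: the two copies of `G` are rows/columns `1,…,2m+1` and
`2m+2,…,4m+2`, while `Fin 2` indexes the two bordering rows/columns `4m+3` and `4m+4`. -/
def blattSzekeresS (G : Type*) [AddCommGroup G] [DecidableEq G] (A B : Finset G) :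
    Matrix ((G ⊕ G) ⊕ Fin 2) ((G ⊕ G) ⊕ Fin 2) ℝ :=
  Matrix.of fun i j =>
    match i, j with
    | .inl (.inl g), .inl (.inl h) => if g = h then 0 else if h - g ∈ A then 1 else -1
    | .inl (.inr g), .inl (.inr h) => if g = h then 0 else if h - g ∈ A then -1 else 1
    | .inl (.inl g), .inl (.inr h) => if h - g ∈ B then 1 else -1
    | .inl (.inr g), .inl (.inl h) => -(if g - h ∈ B then 1 else -1)
    | .inl (.inl _), .inr k => if k = 0 then 1 else -1
    | .inl (.inr _), .inr _ => -1
    | .inr k, .inl (.inl _) => if k = 0 then -1 else 1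
    | .inr _, .inl (.inr _) => 1
    | .inr k, .inr l => if k = l then 0 else if k = 0 then -1 else 1

open Finset Matrix
open scoped Pointwise

namespace Finset

variable {G : Type*} [DecidableEq G] (X : Finset G)

def signIndicator (x : G) : ℝ := if x ∈ X then 1 else -1

lemma signIndicator_eq (x : G) :
    X.signIndicator x = 2 * (if x ∈ X then 1 else 0) - 1 := by
  unfold signIndicator; split_ifs <;> norm_num

lemma signIndicator_mul_self (x : G) : X.signIndicator x * X.signIndicator x = 1 := by
  unfold signIndicator; split_ifs <;> norm_num

lemma sum_signIndicator [Fintype G] : ∑ x, X.signIndicator x = 2 * #X - Fintype.card G := by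
  simp [signIndicator_eq, sum_sub_distrib, mul_comm]

variable [AddCommGroup G]

lemma sum_signIndicator_sub_mul [Fintype G] (δ : G) :
    ∑ x, X.signIndicator (x - δ) * X.signIndicator x =
      4 * #{p ∈ X ×ˢ X | p.1 - p.2 = δ} - 4 * #X + Fintype.card G := by
  have hcorr : #{p ∈ X ×ˢ X | p.1 - p.2 = δ} = #{x | x - δ ∈ X ∧ x ∈ X} := by
    rw [card_sub_eq, ← card_inter_vadd, inter_comm]
    congr 1
    ext x
    simp [← neg_vadd_mem_iff, neg_add_eq_sub]
  have hshift : #{x | x - δ ∈ X} = #X :=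
    card_equiv (Equiv.subRight δ) (by simp)
  have hpoint : ∀ x, X.signIndicator (x - δ) * X.signIndicator x =
      4 * (if x - δ ∈ X ∧ x ∈ X then 1 else 0) - 2 * (if x - δ ∈ X then 1 else 0)
        - 2 * (if x ∈ X then 1 else 0) + 1 := by
    intro x
    simp only [signIndicator_eq, ite_and]
    split_ifs <;> norm_num
  simp only [hpoint, sum_add_distrib, sum_sub_distrib, ← mul_sum, sum_boole, hcorr, hshift,
    filter_mem_eq_inter, univ_inter, sum_const, card_univ]
  ring

lemma union_neg_eq_univ_erase_zero [Fintype G] (hskew : ∀ a ∈ X, -a ∉ X)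
    (hcard : Fintype.card G = 2 * #X + 1) : X ∪ -X = univ.erase 0 := by
  have hdisj : Disjoint X (-X) := disjoint_left.mpr fun a ha ha' => hskew a ha (mem_neg'.mp ha')
  refine eq_of_subset_of_card_le (fun x hx => mem_erase.mpr ⟨?_, mem_univ x⟩) ?_
  · rintro rfl
    rcases mem_union.mp hx with h | h <;> exact hskew 0 (by simpa using h) (by simpa using h)
  · rw [card_union_of_disjoint hdisj, card_neg, card_erase_of_mem (mem_univ 0), card_univ, hcard]
    omega

lemma signIndicator_neg [Fintype G] (hskew : ∀ a ∈ X, -a ∉ X)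
    (hcard : Fintype.card G = 2 * #X + 1) {x : G} (hx : x ≠ 0) :
    X.signIndicator (-x) = -X.signIndicator x := by
  by_cases hxX : x ∈ X
  · simp [signIndicator, hxX, hskew x hxX]
  · have : x ∈ X ∪ -X := by
      rw [union_neg_eq_univ_erase_zero X hskew hcard]; simp [hx]
    simp [signIndicator, hxX, mem_neg'.mp ((mem_union.mp this).resolve_left hxX)]

end Finset

section SignMatrix

variable {G : Type*} [AddCommGroup G] [DecidableEq G]

def signMatrix (X : Finset G) : Matrix G G ℝ := circulant fun x => X.signIndicator (-x)

variable (X : Finset G)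

@[simp]
lemma signMatrix_apply (g h : G) : signMatrix X g h = X.signIndicator (h - g) := by
  simp [signMatrix, neg_sub]

lemma transpose_signMatrix : (signMatrix X)ᵀ = circulant X.signIndicator := by
  simp [signMatrix, transpose_circulant]

variable [Fintype G]

lemma commute_signMatrix (Y : Finset G) : Commute (signMatrix X) (signMatrix Y) :=
  circulant_mul_comm _ _

lemma commute_signMatrix_transpose (Y : Finset G) :
    Commute (signMatrix X) (signMatrix Y)ᵀ := by
  rw [transpose_signMatrix]
  exact circulant_mul_comm _ _

lemma sum_signMatrix_apply_right (g : G) :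
    ∑ h, signMatrix X g h = 2 * #X - Fintype.card G := by
  simpa [← sum_signIndicator] using Fintype.sum_equiv (Equiv.subRight g) _ _ (fun _ => rfl)

lemma sum_signMatrix_apply_left (h : G) :
    ∑ g, signMatrix X g h = 2 * #X - Fintype.card G := by
  simpa [← sum_signIndicator] using Fintype.sum_equiv (Equiv.subLeft h) _ _ (fun _ => rfl)

lemma signMatrix_mul_transpose_apply (g h : G) :
    (signMatrix X * (signMatrix X)ᵀ) g h =
      ∑ x, X.signIndicator (x - (h - g)) * X.signIndicator x := by
  simp only [mul_apply, transpose_apply, signMatrix_apply]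
  exact Fintype.sum_equiv (Equiv.subRight g) _ _ fun k => by
    rw [mul_comm, Equiv.subRight_apply, sub_sub_sub_cancel_right]

lemma signMatrix_add_transpose (hskew : ∀ a ∈ X, -a ∉ X)
    (hcard : Fintype.card G = 2 * #X + 1) :
    signMatrix X + (signMatrix X)ᵀ = (-2 : ℝ) • 1 := by
  ext g h
  rcases eq_or_ne g h with rfl | hgh
  · have h0 : (0 : G) ∉ X := fun h0 => hskew 0 h0 (by simpa using h0)
    simp [signIndicator, h0]
    norm_num
  · have := X.signIndicator_neg hskew hcard (sub_ne_zero.mpr hgh.symm)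
    rw [neg_sub] at this
    simp [one_apply, hgh, this]

lemma transpose_signMatrix_add_one (hskew : ∀ a ∈ X, -a ∉ X)
    (hcard : Fintype.card G = 2 * #X + 1) : (signMatrix X + 1)ᵀ = -(signMatrix X + 1) :=
  calc (signMatrix X + 1)ᵀ = (signMatrix X + (signMatrix X)ᵀ) - signMatrix X + 1 := by
        rw [transpose_add, transpose_one]; abel
    _ = -(signMatrix X + 1) := by rw [signMatrix_add_transpose X hskew hcard]; module

lemma signMatrix_mul_transpose_add_mul_transpose (m : ℕ) (hG : Fintype.card G = 2 * m + 1)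
    (A B : Finset G) (hA : #A = m) (hB : #B = m)
    (hcount : ∀ δ : G, δ ≠ 0 →
      #{p ∈ A ×ˢ A | p.1 - p.2 = δ} + #{p ∈ B ×ˢ B | p.1 - p.2 = δ} = m - 1) :
    signMatrix A * (signMatrix A)ᵀ + signMatrix B * (signMatrix B)ᵀ =
      (4 * m + 4 : ℝ) • 1 - (2 : ℝ) • of fun _ _ => 1 := by
  ext g h
  simp only [Matrix.add_apply, Matrix.sub_apply, Matrix.smul_apply, of_apply, one_apply,
    signMatrix_mul_transpose_apply, smul_eq_mul]
  rcases eq_or_ne g h with rfl | hgh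
  · simp [signIndicator_mul_self, hG]
    ring
  · have hm : 1 ≤ m := by
      have := Fintype.one_lt_card_iff.mpr ⟨g, h, hgh⟩
      omega
    have hc := hcount (h - g) (sub_ne_zero.mpr hgh.symm)
    have hc' : ((#{p ∈ A ×ˢ A | p.1 - p.2 = h - g} : ℕ) : ℝ) +
        #{p ∈ B ×ˢ B | p.1 - p.2 = h - g} + 1 = m := by
      exact_mod_cast (by omega : _ + _ + 1 = m)
    rw [sum_signIndicator_sub_mul, sum_signIndicator_sub_mul, if_neg hgh, hA, hB, hG]
    push_cast
    linarith

end SignMatrix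

section SkewBlocks

variable {m n R : Type*}

lemma transpose_fromBlocks_eq_neg [InvolutiveNeg R] {A : Matrix m m R} {D : Matrix n n R}
    (B : Matrix m n R) (hA : Aᵀ = -A) (hD : Dᵀ = -D) :
    (fromBlocks A B (-Bᵀ) D)ᵀ = -fromBlocks A B (-Bᵀ) D := by
  rw [fromBlocks_transpose, fromBlocks_neg, hA, hD, transpose_neg, transpose_transpose, neg_neg]

variable [Fintype n] [Ring R]

lemma fromBlocks_mul_transpose_of_commute {P Q : Matrix n n R} (hP : Pᵀ = -P)
    (hPQ : Commute P Q) (hPQt : Commute P Qᵀ) (hQ : Commute Q Qᵀ) :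
    fromBlocks P Q (-Qᵀ) (-P) * (fromBlocks P Q (-Qᵀ) (-P))ᵀ =
      fromBlocks (P * Pᵀ + Q * Qᵀ) 0 0 (P * Pᵀ + Q * Qᵀ) := by
  rw [fromBlocks_transpose, fromBlocks_multiply]
  simp only [transpose_neg, transpose_transpose, hP, neg_neg, Matrix.neg_mul, Matrix.mul_neg,
    hPQ.eq, hPQt.eq, hQ.eq]
  congr 1 <;> abel

variable [DecidableEq n]

lemma one_add_mul_transpose_of_transpose_eq_neg {S : Matrix n n R} {c : R} (hS : Sᵀ = -S)
    (hSS : S * Sᵀ = c • 1) : (1 + S) * (1 + S)ᵀ = (1 + c) • 1 := by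
  rw [hS] at hSS
  rw [transpose_add, transpose_one, hS, add_smul, one_smul, ← hSS]
  noncomm_ring

omit [Fintype n] in
lemma one_add_add_transpose_of_transpose_eq_neg {S : Matrix n n R} (hS : Sᵀ = -S) :
    (1 + S) + (1 + S)ᵀ = (2 : R) • 1 := by
  rw [transpose_add, transpose_one, hS, two_smul]
  abel

end SkewBlocks

namespace BlattSzekeres

def border (G : Type*) : Matrix (G ⊕ G) (Fin 2) ℝ :=
  fromRows (of fun _ => ![1, -1]) (of fun _ _ => -1)

def corner : Matrix (Fin 2) (Fin 2) ℝ := !![0, -1; 1, 0]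

lemma transpose_corner : cornerᵀ = -corner := by
  ext i j; fin_cases i <;> fin_cases j <;> simp [corner]

lemma corner_mul_transpose : corner * cornerᵀ = 1 := by
  ext i j; fin_cases i <;> fin_cases j <;> simp [corner, vecMul, dotProduct, Fin.sum_univ_two]

lemma border_mul_transpose (G : Type*) [DecidableEq G] : border G * (border G)ᵀ =
    fromBlocks ((2 : ℝ) • of fun _ _ => 1) 0 0 ((2 : ℝ) • of fun _ _ => 1) := by
  ext (g | g) (h | h) <;> simp [border, mul_apply, Fin.sum_univ_two]
  norm_num

lemma transpose_border_mul (G : Type*) [Fintype G] :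
    (border G)ᵀ * border G = (2 * Fintype.card G : ℝ) • 1 := by
  ext i j; fin_cases i <;> fin_cases j <;> simp [border, mul_apply, Fintype.sum_sum_type] <;> ring

variable {G : Type*} [AddCommGroup G] [DecidableEq G]

def core (A B : Finset G) : Matrix (G ⊕ G) (G ⊕ G) ℝ :=
  fromBlocks (signMatrix A + 1) (signMatrix B) (-(signMatrix B)ᵀ) (-(signMatrix A + 1))

lemma one_add_blattSzekeresS_apply_eq_one_or_neg_one (A B : Finset G)
    (i j : (G ⊕ G) ⊕ Fin 2) :
    (1 + blattSzekeresS G A B) i j = 1 ∨ (1 + blattSzekeresS G A B) i j = -1 := by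
  rcases i with (g | g) | k <;> rcases j with (h | h) | l <;>
    simp only [Matrix.add_apply, one_apply, blattSzekeresS, of_apply] <;>
    split_ifs <;> simp_all

lemma blattSzekeresS_eq_fromBlocks (A B : Finset G) (h0 : (0 : G) ∉ A) :
    blattSzekeresS G A B = fromBlocks (core A B) (border G) (-(border G)ᵀ) corner := by
  ext ((g | g) | k) ((h | h) | l) <;>
    simp [blattSzekeresS, core, border, corner, one_apply, signIndicator]
  all_goals (try fin_cases k) <;> (try fin_cases l) <;> split_ifs <;> simp_all

variable [Fintype G]

lemma core_mul_border (A B : Finset G) (hA : Fintype.card G = 2 * #A + 1)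
    (hB : Fintype.card G = 2 * #B + 1) : core A B * border G = border G * cornerᵀ := by
  have hP (g : G) : ∑ h, (signMatrix A + 1) g h = 0 := by
    simp only [Matrix.add_apply, sum_add_distrib, sum_signMatrix_apply_right, one_apply,
      sum_ite_eq, mem_univ, if_true, hA]
    push_cast; ring
  have hQ (g : G) : ∑ h, signMatrix B g h = -1 := by
    rw [sum_signMatrix_apply_right, hB]; push_cast; ring
  have hQt (g : G) : ∑ h, (signMatrix B)ᵀ g h = -1 := by
    simp only [transpose_apply, sum_signMatrix_apply_left, hB]; push_cast; ring
  ext (g | g) r <;>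
    simp only [core, border, corner, mul_apply, Fintype.sum_sum_type, fromBlocks_apply₁₁,
      fromBlocks_apply₁₂, fromBlocks_apply₂₁, fromBlocks_apply₂₂, fromRows_apply_inl,
      fromRows_apply_inr, of_apply, ← sum_mul, Matrix.neg_apply, sum_neg_distrib, hP, hQ, hQt,
      Fin.sum_univ_two] <;>
    fin_cases r <;> simp

lemma transpose_core (A B : Finset G) (hskew : ∀ a ∈ A, -a ∉ A)
    (hcard : Fintype.card G = 2 * #A + 1) : (core A B)ᵀ = -core A B := by
  have hP := transpose_signMatrix_add_one A hskew hcard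
  exact transpose_fromBlocks_eq_neg _ hP (by rw [transpose_neg, hP])

lemma core_mul_transpose_add_border_mul_transpose (m : ℕ) (hG : Fintype.card G = 2 * m + 1)
    (A B : Finset G) (hA : #A = m) (hB : #B = m) (hskew : ∀ a ∈ A, -a ∉ A)
    (hcount : ∀ δ : G, δ ≠ 0 →
      #{p ∈ A ×ˢ A | p.1 - p.2 = δ} + #{p ∈ B ×ˢ B | p.1 - p.2 = δ} = m - 1) :
    core A B * (core A B)ᵀ + border G * (border G)ᵀ = (4 * m + 3 : ℝ) • 1 := by
  have hP := transpose_signMatrix_add_one A hskew (by rw [hG, hA])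
  have hPQ := signMatrix_mul_transpose_add_mul_transpose m hG A B hA hB hcount
  have hdiag : (signMatrix A + 1) * (signMatrix A + 1)ᵀ + signMatrix B * (signMatrix B)ᵀ
      + (2 : ℝ) • of (fun _ _ => 1) = (4 * m + 3 : ℝ) • 1 := by
    calc (signMatrix A + 1) * (signMatrix A + 1)ᵀ + signMatrix B * (signMatrix B)ᵀ
          + (2 : ℝ) • of (fun _ _ => 1)
        = (signMatrix A * (signMatrix A)ᵀ + signMatrix B * (signMatrix B)ᵀ)
          + (signMatrix A + (signMatrix A)ᵀ) + 1 + (2 : ℝ) • of (fun _ _ => 1) := by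
          rw [transpose_add, transpose_one]; noncomm_ring
      _ = (4 * m + 3 : ℝ) • 1 := by
          rw [hPQ, signMatrix_add_transpose A hskew (by rw [hG, hA])]; module
  rw [core, fromBlocks_mul_transpose_of_commute hP
    ((commute_signMatrix A B).add_left (Commute.one_left _))
    ((commute_signMatrix_transpose A B).add_left (Commute.one_left _))
    (commute_signMatrix_transpose B B), border_mul_transpose, fromBlocks_add, hdiag, add_zero,
    ← fromBlocks_one, fromBlocks_smul, smul_zero]

lemma transpose_blattSzekeresS (A B : Finset G) (hskew : ∀ a ∈ A, -a ∉ A)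
    (hcard : Fintype.card G = 2 * #A + 1) :
    (blattSzekeresS G A B)ᵀ = -blattSzekeresS G A B := by
  rw [blattSzekeresS_eq_fromBlocks A B fun h => hskew 0 h (by simpa using h)]
  exact transpose_fromBlocks_eq_neg _ (transpose_core A B hskew hcard) transpose_corner

lemma blattSzekeresS_mul_transpose (m : ℕ) (hG : Fintype.card G = 2 * m + 1)
    (A B : Finset G) (hA : #A = m) (hB : #B = m) (hskew : ∀ a ∈ A, -a ∉ A)
    (hcount : ∀ δ : G, δ ≠ 0 →
      #{p ∈ A ×ˢ A | p.1 - p.2 = δ} + #{p ∈ B ×ˢ B | p.1 - p.2 = δ} = m - 1) :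
    blattSzekeresS G A B * (blattSzekeresS G A B)ᵀ = (4 * m + 3 : ℝ) • 1 := by
  have hA' : Fintype.card G = 2 * #A + 1 := by rw [hG, hA]
  have hCE := core_mul_border A B hA' (by rw [hG, hB])
  have hEC : -(border G)ᵀ * (core A B)ᵀ + corner * (border G)ᵀ = 0 := by
    rw [Matrix.neg_mul, ← transpose_mul, hCE, transpose_mul, transpose_transpose, neg_add_cancel]
  have hED : -(border G)ᵀ * -border G + corner * cornerᵀ = (4 * m + 3 : ℝ) • 1 := by
    rw [Matrix.neg_mul, Matrix.mul_neg, neg_neg, transpose_border_mul,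
      corner_mul_transpose, hG]
    push_cast
    module
  rw [blattSzekeresS_eq_fromBlocks A B fun h => hskew 0 h (by simpa using h),
    fromBlocks_transpose, fromBlocks_multiply,
    core_mul_transpose_add_border_mul_transpose m hG A B hA hB hskew hcount, transpose_neg, transpose_transpose, Matrix.mul_neg, hCE, neg_add_cancel, hEC, hED]
  conv_rhs => rw [← fromBlocks_one, fromBlocks_smul, smul_zero, smul_zero]

end BlattSzekeres

theorem blatt_szekeres_skew_hadamard (G : Type*) [AddCommGroup G] [Fintype G] [DecidableEq G]
    (m : ℕ) (hG : Fintype.card G = 2 * m + 1) (A B : Finset G)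
    (hA : A.card = m) (hB : B.card = m)
    (hskew : ∀ a ∈ A, -a ∉ A)
    (hcount : ∀ δ : G, δ ≠ 0 →
      ((A ×ˢ A).filter (fun p => p.1 - p.2 = δ)).card +
      ((B ×ˢ B).filter (fun p => p.1 - p.2 = δ)).card = m - 1) :
    (∀ i j, (1 + blattSzekeresS G A B) i j = 1 ∨ (1 + blattSzekeresS G A B) i j = -1) ∧
    (1 + blattSzekeresS G A B) * (1 + blattSzekeresS G A B).transpose =
      ((4 * (m + 1) : ℕ) : ℝ) • (1 : Matrix ((G ⊕ G) ⊕ Fin 2) ((G ⊕ G) ⊕ Fin 2) ℝ) ∧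
    (1 + blattSzekeresS G A B) + (1 + blattSzekeresS G A B).transpose =
      (2 : ℝ) • (1 : Matrix ((G ⊕ G) ⊕ Fin 2) ((G ⊕ G) ⊕ Fin 2) ℝ) := by
  have hS := BlattSzekeres.transpose_blattSzekeresS A B hskew (by rw [hG, hA])
  refine ⟨BlattSzekeres.one_add_blattSzekeresS_apply_eq_one_or_neg_one A B, ?_,
    one_add_add_transpose_of_transpose_eq_neg hS⟩
  rw [one_add_mul_transpose_of_transpose_eq_neg hS
    (BlattSzekeres.blattSzekeresS_mul_transpose m hG A B hA hB hskew hcount)]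
  congr 1
  push_cast
  ring
end

section
/- Two amicable Hadamard matrices W = I + S (skew) and M (symmetric) of order n with W Mᵀ = M Wᵀ yield amicable orthogonal designs of type ((1, n−1); (n)): namely A = xI + yS and B = zM satisfy A Aᵀ = (x² + (n−1)y²)I, B Bᵀ = n z² I, and A Bᵀ = B Aᵀ. -/
/-!
Since `Sᵀ = -S`, the Hadamard condition `(1 + S)(1 - S) = n • 1` says `S² = (1 - n) • 1`, and
amicability `(1 + S) M = M (1 - S)` says `S M = -M S`. Then
`(x + yS)(x - yS) = x² - y² S² = (x² + (n - 1) y²) • 1`, and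
`(x + yS)(zM) - (zM)(x - yS) = yz (S M + M S) = 0`.
-/

open Matrix

section

variable {m R : Type*} [Fintype m] [DecidableEq m] [CommRing R]

theorem mul_self_eq_of_transpose_eq_neg {S : Matrix m m R} (hS : Sᵀ = -S) {c : R}
    (h : (1 + S) * (1 + S)ᵀ = c • 1) : S * S = (1 - c) • 1 := by
  rw [transpose_add, transpose_one, hS] at h
  rw [sub_smul, one_smul, ← h]
  noncomm_ring

theorem mul_eq_neg_mul_of_amicable {S M : Matrix m m R} (hS : Sᵀ = -S) (hM : Mᵀ = M)
    (h : (1 + S) * Mᵀ = M * (1 + S)ᵀ) : S * M = -(M * S) := by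
  rw [transpose_add, transpose_one, hS, hM, add_mul, mul_add, one_mul, mul_one, mul_neg] at h
  exact add_left_cancel h

theorem smul_one_add_smul_mul_transpose {S : Matrix m m R} (hS : Sᵀ = -S) {d : R}
    (hSS : S * S = d • 1) (x y : R) :
    (x • (1 : Matrix m m R) + y • S) * (x • 1 + y • S)ᵀ = (x ^ 2 - d * y ^ 2) • 1 := by
  rw [transpose_add, transpose_smul, transpose_smul, transpose_one, hS]
  simp only [add_mul, mul_add, smul_mul_smul_comm, one_mul, mul_one, mul_neg, hSS, smul_smul,
    smul_neg]
  module

theorem smul_mul_transpose_smul_of_mul_transpose {M : Matrix m m R} {c : R}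
    (hM : M * Mᵀ = c • 1) (z : R) : (z • M) * (z • M)ᵀ = (c * z ^ 2) • 1 := by
  rw [transpose_smul, smul_mul_smul_comm, hM, smul_smul]
  ring_nf

theorem smul_one_add_smul_amicable_smul {S M : Matrix m m R} (hS : Sᵀ = -S) (hM : Mᵀ = M)
    (hSM : S * M = -(M * S)) (x y z : R) :
    (x • (1 : Matrix m m R) + y • S) * (z • M)ᵀ = (z • M) * (x • 1 + y • S)ᵀ := by
  rw [transpose_add, transpose_smul, transpose_smul, transpose_smul, transpose_one, hS, hM]
  simp only [add_mul, mul_add, smul_mul_smul_comm, one_mul, mul_one, mul_neg, hSM]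
  module

end

theorem amicable_orthogonal_designs_from_amicable_hadamard_general (n : ℕ)
    (S M : Matrix (Fin n) (Fin n) ℝ)
    (hSskew : S.transpose = -S)
    (hW : (1 + S) * (1 + S).transpose = (n : ℝ) • (1 : Matrix (Fin n) (Fin n) ℝ))
    (hMsym : M.transpose = M)
    (hM : M * M.transpose = (n : ℝ) • (1 : Matrix (Fin n) (Fin n) ℝ))
    (hamic : (1 + S) * M.transpose = M * (1 + S).transpose)
    (x y z : ℝ) :
    (x • (1 : Matrix (Fin n) (Fin n) ℝ) + y • S) *
        (x • (1 : Matrix (Fin n) (Fin n) ℝ) + y • S).transpose =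
      (x ^ 2 + ((n : ℝ) - 1) * y ^ 2) • (1 : Matrix (Fin n) (Fin n) ℝ) ∧
    (z • M) * (z • M).transpose = ((n : ℝ) * z ^ 2) • (1 : Matrix (Fin n) (Fin n) ℝ) ∧
    (x • (1 : Matrix (Fin n) (Fin n) ℝ) + y • S) * (z • M).transpose =
      (z • M) * (x • (1 : Matrix (Fin n) (Fin n) ℝ) + y • S).transpose := by
  have hSS := mul_self_eq_of_transpose_eq_neg hSskew hW
  have hSM := mul_eq_neg_mul_of_amicable hSskew hMsym hamic
  refine ⟨?_, smul_mul_transpose_smul_of_mul_transpose hM z,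
    smul_one_add_smul_amicable_smul hSskew hMsym hSM x y z⟩
  rw [smul_one_add_smul_mul_transpose hSskew hSS]
  congr 1
  ring

theorem amicable_orthogonal_designs_from_amicable_hadamard (n : ℕ)
    (S M : Matrix (Fin n) (Fin n) ℝ)
    (hSskew : S.transpose = -S)
    (hWpm : ∀ i j, (1 + S) i j = 1 ∨ (1 + S) i j = -1)
    (hW : (1 + S) * (1 + S).transpose = (n : ℝ) • (1 : Matrix (Fin n) (Fin n) ℝ))
    (hMsym : M.transpose = M)
    (hMpm : ∀ i j, M i j = 1 ∨ M i j = -1)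
    (hM : M * M.transpose = (n : ℝ) • (1 : Matrix (Fin n) (Fin n) ℝ))
    (hamic : (1 + S) * M.transpose = M * (1 + S).transpose)
    (x y z : ℝ) :
    (x • (1 : Matrix (Fin n) (Fin n) ℝ) + y • S) *
        (x • (1 : Matrix (Fin n) (Fin n) ℝ) + y • S).transpose =
      (x ^ 2 + ((n : ℝ) - 1) * y ^ 2) • (1 : Matrix (Fin n) (Fin n) ℝ) ∧
    (z • M) * (z • M).transpose = ((n : ℝ) * z ^ 2) • (1 : Matrix (Fin n) (Fin n) ℝ) ∧
    (x • (1 : Matrix (Fin n) (Fin n) ℝ) + y • S) * (z • M).transpose =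
      (z • M) * (x • (1 : Matrix (Fin n) (Fin n) ℝ) + y • S).transpose :=
  amicable_orthogonal_designs_from_amicable_hadamard_general n S M hSskew hW hMsym hM hamic x y z
end
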